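/- arXiv:2211.03228 — 2 statements merged into one kernel-verified Lean document; each statement's English description precedes it below -/
import Mathlib

section
/- Let P be a poset and let (P_i)_{i∈D} be the subposets induced on the connected components of the incomparability graph of P. Then either Cov(P) = Cov(P_i) for some i ∈ D, or Cov(P) = sup_{i∈D} Cov(P_i). -/
open Cardinal

/-- The incomparability graph of a poset: edges are the incomparable pairs. -/
def incGraph (α : Type*) [PartialOrder α] : SimpleGraph α where
  Adj x y := ¬ x ≤ y ∧ ¬ y ≤ x
  symm := ⟨fun _ _ h => ⟨h.2, h.1⟩⟩
  loopless := ⟨fun _ h => h.1 le_rfl⟩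

noncomputable def chainCov {α : Type*} [PartialOrder α] (S : Set α) : Cardinal :=
  sInf {c : Cardinal | ∃ F : Set (Set α),
    (∀ T ∈ F, T ⊆ S ∧ IsChain (· ≤ ·) T) ∧ ⋃₀ F = S ∧ #F = c}

/- Vertices in different components of the incomparability graph are comparable. Hence, if
`κ` bounds every `Cov(P_i)`, index a chain cover of each component by one set of size `κ`
(padding with empty chains) and merge the `j`-th chains of all components: the merged sets
are chains, and they cover `P`. So `Cov(P) ≤ sup Cov(P_i)`, and the reverse inequality holds
because `Cov` is monotone. -/

universe u

section

variable {α : Type u} [PartialOrder α]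

lemma chainCov_le_mk {S : Set α} (F : Set (Set α))
    (hF : ∀ T ∈ F, T ⊆ S ∧ IsChain (· ≤ ·) T) (hcover : ⋃₀ F = S) :
    chainCov S ≤ #F :=
  csInf_le' ⟨F, hF, hcover, rfl⟩

lemma exists_chain_cover_mk_eq_chainCov (S : Set α) :
    ∃ F : Set (Set α), (∀ T ∈ F, T ⊆ S ∧ IsChain (· ≤ ·) T) ∧ ⋃₀ F = S ∧
      #F = chainCov S := by
  refine csInf_mem (s := {c : Cardinal | ∃ F : Set (Set α),
      (∀ T ∈ F, T ⊆ S ∧ IsChain (· ≤ ·) T) ∧ ⋃₀ F = S ∧ #F = c})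
    ⟨_, (fun x => {x}) '' S, ?_, ?_, rfl⟩
  · rintro T ⟨x, hx, rfl⟩
    exact ⟨Set.singleton_subset_iff.2 hx, Set.subsingleton_singleton.isChain⟩
  · ext x
    simp

lemma chainCov_mono {S S' : Set α} (h : S ⊆ S') : chainCov S ≤ chainCov S' := by
  obtain ⟨F, hF, hcover, hmk⟩ := exists_chain_cover_mk_eq_chainCov S'
  calc chainCov S ≤ #((· ∩ S) '' F) := by
        refine chainCov_le_mk _ ?_ ?_
        · rintro _ ⟨T, hT, rfl⟩
          exact ⟨Set.inter_subset_right, (hF T hT).2.mono Set.inter_subset_left⟩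
        · rw [Set.sUnion_image, ← Set.iUnion₂_inter, ← Set.sUnion_eq_biUnion, hcover,
            Set.inter_eq_right.2 h]
    _ ≤ #F := mk_image_le
    _ = chainCov S' := hmk

lemma chainCov_le_mk_of_iUnion {ι : Type u} {S : Set α} (g : ι → Set α)
    (hg : ∀ j, g j ⊆ S ∧ IsChain (· ≤ ·) (g j)) (hcover : S ⊆ ⋃ j, g j) :
    chainCov S ≤ #ι := by
  refine (chainCov_le_mk (Set.range g) ?_ ?_).trans mk_range_le
  · rintro _ ⟨j, rfl⟩
    exact hg j
  · rw [Set.sUnion_range]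
    exact (Set.iUnion_subset fun j => (hg j).1).antisymm hcover

lemma exists_iUnion_chain_cover_of_chainCov_le {ι : Type u} {S : Set α}
    (h : chainCov S ≤ #ι) :
    ∃ g : ι → Set α, (∀ j, g j ⊆ S ∧ IsChain (· ≤ ·) (g j)) ∧ S ⊆ ⋃ j, g j := by
  obtain ⟨F, hF, hcover, hmk⟩ := exists_chain_cover_mk_eq_chainCov S
  obtain ⟨e⟩ : Nonempty (F ↪ ι) := (le_def _ _).1 (hmk ▸ h)
  refine ⟨Function.extend e Subtype.val fun _ => ∅, fun j => ?_, fun x hx => ?_⟩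
  · by_cases hj : ∃ T, e T = j
    · obtain ⟨T, rfl⟩ := hj
      rw [e.injective.extend_apply]
      exact hF T T.2
    · rw [Function.extend_apply' _ _ _ hj]
      exact ⟨Set.empty_subset S, Set.subsingleton_empty.isChain⟩
  · rw [← hcover] at hx
    obtain ⟨T, hT, hxT⟩ := hx
    exact Set.mem_iUnion.2 ⟨e ⟨T, hT⟩, by rwa [e.injective.extend_apply]⟩

lemma le_or_le_of_connectedComponentMk_ne {x y : α}
    (h : (incGraph α).connectedComponentMk x ≠ (incGraph α).connectedComponentMk y) :
    x ≤ y ∨ y ≤ x := by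
  by_contra! hxy
  exact h (SimpleGraph.ConnectedComponent.sound
    (SimpleGraph.Adj.reachable (G := incGraph α) ⟨hxy.1, hxy.2⟩))

lemma isChain_iUnion_of_subset_supp (g : (incGraph α).ConnectedComponent → Set α)
    (hg : ∀ c, g c ⊆ c.supp ∧ IsChain (· ≤ ·) (g c)) :
    IsChain (· ≤ ·) (⋃ c, g c) := by
  simp only [IsChain, Set.Pairwise, Set.mem_iUnion]
  rintro x ⟨c, hx⟩ y ⟨d, hy⟩ hne
  obtain rfl | hcd := eq_or_ne c d
  · exact (hg c).2 hx hy hne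
  · refine le_or_le_of_connectedComponentMk_ne ?_
    rwa [(hg c).1 hx, (hg d).1 hy]

lemma chainCov_univ_le_iSup_chainCov_supp :
    chainCov (Set.univ : Set α) ≤ ⨆ c : (incGraph α).ConnectedComponent, chainCov c.supp := by
  set κ := ⨆ c : (incGraph α).ConnectedComponent, chainCov c.supp
  have hcov (c : (incGraph α).ConnectedComponent) : chainCov c.supp ≤ #κ.out := by
    rw [mk_out]
    exact le_ciSup bddAbove_of_small c
  choose g hg hcover using fun c => exists_iUnion_chain_cover_of_chainCov_le (hcov c)
  calc chainCov (Set.univ : Set α) ≤ #κ.out := by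
        refine chainCov_le_mk_of_iUnion (fun j => ⋃ c, g c j)
          (fun j => ⟨Set.subset_univ _, isChain_iUnion_of_subset_supp _ fun c => hg c j⟩) ?_
        intro x _
        obtain ⟨j, hj⟩ :=
          Set.mem_iUnion.1 (hcover _ SimpleGraph.ConnectedComponent.connectedComponentMk_mem)
        exact Set.mem_iUnion.2 ⟨j, Set.mem_iUnion.2 ⟨_, hj⟩⟩
    _ = κ := mk_out κ

theorem chainCov_univ_eq_iSup_chainCov_supp :
    chainCov (Set.univ : Set α) = ⨆ c : (incGraph α).ConnectedComponent, chainCov c.supp :=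
  chainCov_univ_le_iSup_chainCov_supp.antisymm
    (ciSup_le' fun _ => chainCov_mono (Set.subset_univ _))

end

theorem cov_eq_component_or_sup (α : Type u) [PartialOrder α] :
    (∃ c : (incGraph α).ConnectedComponent,
        chainCov (Set.univ : Set α) = chainCov c.supp) ∨
      chainCov (Set.univ : Set α) =
        ⨆ c : (incGraph α).ConnectedComponent, chainCov c.supp :=
  Or.inr chainCov_univ_eq_iSup_chainCov_supp
end

section
/- Let ν be an uncountable cardinal and P a poset such that Cov(P) ≥ ν and Cov(P \ ↑x) < ν for every x ∈ P. Then the cofinality of P (least cardinality of a cofinal subset) is at least the cofinality of ν. In particular P has no maximal element. -/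
open Cardinal

private lemma chainCov_le {α : Type*} [PartialOrder α] {S : Set α} {F : Set (Set α)}
    (h1 : ∀ T ∈ F, T ⊆ S ∧ IsChain (· ≤ ·) T) (h2 : ⋃₀ F = S) :
    chainCov S ≤ #F :=
  csInf_le' ⟨F, h1, h2, rfl⟩

private lemma chainCov_exists {α : Type*} [PartialOrder α] (S : Set α) :
    ∃ F : Set (Set α),
      (∀ T ∈ F, T ⊆ S ∧ IsChain (· ≤ ·) T) ∧ ⋃₀ F = S ∧ #F = chainCov S := by
  have hne : {c : Cardinal | ∃ F : Set (Set α),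
      (∀ T ∈ F, T ⊆ S ∧ IsChain (· ≤ ·) T) ∧ ⋃₀ F = S ∧ #F = c}.Nonempty := by
    refine ⟨_, (fun s : S => ({s.1} : Set α)) '' Set.univ, ?_, ?_, rfl⟩
    · rintro T ⟨s, -, rfl⟩
      exact ⟨Set.singleton_subset_iff.2 s.2, Set.subsingleton_singleton.isChain⟩
    · ext x
      simp only [Set.mem_sUnion, Set.mem_image, Set.mem_univ, true_and]
      constructor
      · rintro ⟨T, ⟨s, rfl⟩, hx⟩
        exact hx ▸ s.2
      · intro hx
        exact ⟨{x}, ⟨⟨x, hx⟩, rfl⟩, rfl⟩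
  obtain ⟨F, hF⟩ := csInf_mem hne
  exact ⟨F, hF.1, hF.2.1, hF.2.2⟩

theorem cofinality_ge_and_no_max {α : Type u} [PartialOrder α] (ν : Cardinal)
    (hν : ℵ₀ < ν)
    (hcov : ν ≤ chainCov (Set.univ : Set α))
    (hup : ∀ x : α, chainCov (Set.Ici x)ᶜ < ν) :
    (∀ A : Set α, (∀ p : α, ∃ a ∈ A, p ≤ a) → ν.ord.cof ≤ #A) ∧
      ∀ x : α, ∃ y : α, x < y := by
  constructor
  · intro A hA
    by_contra hlt
    push_neg at hlt
    -- choose for each a ∈ A a minimal chain cover of (Ici a)ᶜ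
    choose F hF hFU hFc using fun a : A => chainCov_exists (Set.Ici a.1)ᶜ
    -- the set of maximum elements
    set M : Set α := {p | ∀ a ∈ A, a ≤ p} with hM
    have hMsub : M.Subsingleton := by
      intro p hp q hq
      obtain ⟨a, ha, hpa⟩ := hA p
      obtain ⟨b, hb, hqb⟩ := hA q
      exact le_antisymm (hpa.trans (hq a ha)) (hqb.trans (hp b hb))
    set G : Set (Set α) := (⋃ a : A, F a) ∪ {M} with hG
    have hcover : ⋃₀ G = (Set.univ : Set α) := by
      ext p
      simp only [Set.mem_univ, iff_true, Set.mem_sUnion]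
      by_cases hp : ∀ a ∈ A, a ≤ p
      · exact ⟨M, Or.inr rfl, hp⟩
      · push_neg at hp
        obtain ⟨a, ha, hap⟩ := hp
        have hpmem : p ∈ (Set.Ici (⟨a, ha⟩ : A).1)ᶜ := hap
        rw [← hFU ⟨a, ha⟩] at hpmem
        obtain ⟨T, hT, hpT⟩ := hpmem
        exact ⟨T, Or.inl (Set.mem_iUnion.2 ⟨⟨a, ha⟩, hT⟩), hpT⟩
    have hchains : ∀ T ∈ G, T ⊆ (Set.univ : Set α) ∧ IsChain (· ≤ ·) T := by
      rintro T (hT | hT)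
      · obtain ⟨a, hTa⟩ := Set.mem_iUnion.1 hT
        exact ⟨Set.subset_univ _, (hF a T hTa).2⟩
      · rw [Set.mem_singleton_iff] at hT
        subst hT
        exact ⟨Set.subset_univ _, hMsub.isChain⟩
    have hcard : #G < ν := by
      have h1 : #G ≤ #(⋃ a : A, F a) + #({M} : Set (Set α)) := Cardinal.mk_union_le _ _
      have h2 : #(⋃ a : A, F a) ≤ #A * ⨆ a : A, #(F a) := Cardinal.mk_iUnion_le _
      have hsup : (⨆ a : A, #(F a)) < ν := by
        exact Ordinal.iSup_lt hlt fun a => (hFc a).symm ▸ hup a.1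
      have h3 : #A * (⨆ a : A, #(F a)) < ν :=
        Cardinal.mul_lt_of_lt hν.le (hlt.trans_le (Ordinal.cof_ord_le ν)) hsup
      have h4 : #({M} : Set (Set α)) < ν := by
        rw [Cardinal.mk_singleton]
        exact Cardinal.one_lt_aleph0.trans hν
      exact lt_of_le_of_lt h1 (Cardinal.add_lt_of_lt hν.le (h2.trans_lt h3) h4)
    exact absurd (hcov.trans (chainCov_le hchains hcover)) (not_le.2 hcard)
  · intro x
    by_contra hx
    push_neg at hx
    have hIci : Set.Ici x = {x} := by
      ext y
      simp only [Set.mem_Ici, Set.mem_singleton_iff]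
      exact ⟨fun h => ((lt_or_eq_of_le h).resolve_left (fun h' => hx y h')).symm,
        fun h => h ▸ le_rfl⟩
    obtain ⟨F, hF, hFU, hFc⟩ := chainCov_exists (Set.Ici x)ᶜ
    set G : Set (Set α) := F ∪ {{x}} with hG
    have hcover : ⋃₀ G = (Set.univ : Set α) := by
      ext p
      simp only [Set.mem_univ, iff_true, Set.mem_sUnion]
      by_cases hp : p ∈ Set.Ici x
      · rw [hIci] at hp
        exact ⟨{x}, Or.inr rfl, hp⟩
      · have hp' : p ∈ ⋃₀ F := hFU ▸ hp
        obtain ⟨T, hT, hpT⟩ := hp'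
        exact ⟨T, Or.inl hT, hpT⟩
    have hchains : ∀ T ∈ G, T ⊆ (Set.univ : Set α) ∧ IsChain (· ≤ ·) T := by
      rintro T (hT | hT)
      · exact ⟨Set.subset_univ _, (hF T hT).2⟩
      · rw [Set.mem_singleton_iff] at hT
        subst hT
        exact ⟨Set.subset_univ _, Set.subsingleton_singleton.isChain⟩
    have hcard : #G < ν := by
      calc #G ≤ #F + #({{x}} : Set (Set α)) := Cardinal.mk_union_le _ _
        _ < ν := by
            apply Cardinal.add_lt_of_lt hν.le
            · rw [hFc]; exact hup x
            · rw [Cardinal.mk_singleton]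
              exact Cardinal.one_lt_aleph0.trans hν
    exact absurd (hcov.trans (chainCov_le hchains hcover)) (not_le.2 hcard)
end
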